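/- arXiv:2208.14529 — 5 statements merged into one kernel-verified Lean document; each statement's English description precedes it below -/
import Mathlib

section
/- Let P and Q be good rectangular preorders on Coll(m,n), viewed as subsets of Coll(m,n) × Coll(m,n). Then the transitive closure of P ∪ Q is also a good rectangular preorder. -/
/-!
Let `R` be the transitive closure of `P ∪ Q`. Reflexivity, transitivity and comparability of
orthogonal collisions come from `P`. If parallel `x`, `y` are `R`-incomparable, they are
`P`-incomparable, and a `P`-gap between them is an `R`-gap.

Conversely, let `x ≤ y` in `R` with no `R`-link and let `g` lie between them. In a good preorder,
every collision between a comparable pair `c ≤ d` without link lies below `c` or `d`. Walk along a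
chain of `P`- and `Q`-steps from `x` to `y`. No collision on it is orthogonal to `x`, since it
would be an `R`-link; at the step `c → d` where `g` stops lying between the current collision and
`y`, it lies between `c` and `d`, and this step has no link because such a link would again be an
`R`-link. So `g ≤ c` or `g ≤ d`, hence `g ≤ y` in `R`, and `g` is no gap.
-/

/-- `Coll m n` is the set of collisions: vertical collisions `mᵢ` for `1 ≤ i < m`
(encoded `Sum.inl`) and horizontal collisions `lⱼ` for `1 ≤ j < n` (encoded `Sum.inr`). -/
abbrev Coll (m n : ℕ) := Fin (m - 1) ⊕ Fin (n - 1)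

/-- A vertical and a horizontal collision are orthogonal. -/
def Orthogonal {m n : ℕ} : Coll m n → Coll m n → Prop
  | Sum.inl _, Sum.inr _ => True
  | Sum.inr _, Sum.inl _ => True
  | _, _ => False

/-- Two distinct collisions of the same kind are parallel. -/
def Parallel {m n : ℕ} : Coll m n → Coll m n → Prop
  | Sum.inl i, Sum.inl j => i ≠ j
  | Sum.inr i, Sum.inr j => i ≠ j
  | _, _ => False

/-- `Between x y g`: `g` is a collision parallel to `x` and `y` whose index lies in the
interval spanned by the indices of `x` and `y`. -/
def Between {m n : ℕ} : Coll m n → Coll m n → Coll m n → Prop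
  | Sum.inl i, Sum.inl j, Sum.inl s => min i j ≤ s ∧ s ≤ max i j
  | Sum.inr i, Sum.inr j, Sum.inr s => min i j ≤ s ∧ s ≤ max i j
  | _, _, _ => False

/-- Strict comparison in a preorder `R`. -/
def StrictR {m n : ℕ} (R : Coll m n → Coll m n → Prop) (x y : Coll m n) : Prop :=
  R x y ∧ ¬ R y x

/-- `z` is an orthogonal link between the parallel collisions `x` and `y`:
`z` is orthogonal to them and `x ≤ z ≤ y` or `y ≤ z ≤ x`. -/
def IsLink {m n : ℕ} (R : Coll m n → Coll m n → Prop) (x y z : Coll m n) : Prop :=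
  Orthogonal x z ∧ ((R x z ∧ R z y) ∨ (R y z ∧ R z x))

/-- `g` is a gap between the parallel collisions `x` and `y`: its index is between theirs
and `x < g > y` strictly. -/
def IsGap {m n : ℕ} (R : Coll m n → Coll m n → Prop) (x y g : Coll m n) : Prop :=
  Between x y g ∧ StrictR R x g ∧ StrictR R y g

/-- A good rectangular preorder on `Coll m n`: a reflexive transitive relation such that
orthogonal collisions are always comparable, and parallel collisions are comparable iff
there is an orthogonal link between them or there is no gap between them. -/
structure IsGoodRect {m n : ℕ} (R : Coll m n → Coll m n → Prop) : Prop where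
  refl : ∀ x, R x x
  trans : ∀ x y z, R x y → R y z → R x z
  orth : ∀ x y, Orthogonal x y → R x y ∨ R y x
  par : ∀ x y, Parallel x y →
    ((R x y ∨ R y x) ↔ ((∃ z, IsLink R x y z) ∨ ¬ ∃ g, IsGap R x y g))

/-- `P` refines `Q`: every comparison of `P` holds in `Q`. -/
def Refines {m n : ℕ} (P Q : Coll m n → Coll m n → Prop) : Prop :=
  ∀ x y, P x y → Q x y

/-- A vertex preorder: a good rectangular preorder in which equivalence implies equality. -/
def IsVertexP {m n : ℕ} (R : Coll m n → Coll m n → Prop) : Prop :=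
  IsGoodRect R ∧ ∀ x y, R x y → R y x → x = y

/-- An edge preorder: a good rectangular preorder with exactly one equivalence class of
size two (the pair `{a,b}`), all other classes being singletons. -/
def IsEdgeP {m n : ℕ} (R : Coll m n → Coll m n → Prop) : Prop :=
  IsGoodRect R ∧ ∃ a b : Coll m n, a ≠ b ∧ R a b ∧ R b a ∧
    ∀ x y : Coll m n, x ≠ y → R x y → R y x → (x = a ∧ y = b) ∨ (x = b ∧ y = a)

section Kinds
variable {m n : ℕ}

lemma orthogonal_iff {x y : Coll m n} : Orthogonal x y ↔ x.isLeft ≠ y.isLeft := by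
  rcases x with _ | _ <;> rcases y with _ | _ <;> simp [Orthogonal]

lemma parallel_iff {x y : Coll m n} : Parallel x y ↔ x.isLeft = y.isLeft ∧ x ≠ y := by
  rcases x with _ | _ <;> rcases y with _ | _ <;> simp [Parallel]

lemma Between.isLeft_eq {a b u : Coll m n} (h : Between a b u) :
    a.isLeft = u.isLeft ∧ b.isLeft = u.isLeft := by
  rcases a with _ | _ <;> rcases b with _ | _ <;> rcases u with _ | _ <;> simp_all [Between]

lemma Between.symm {a b u : Coll m n} (h : Between a b u) : Between b a u := by
  rcases a with _ | _ <;> rcases b with _ | _ <;> rcases u with _ | _ <;>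
    simp_all [Between, min_comm, max_comm]

lemma Between.eq_of_self {a u : Coll m n} (h : Between a a u) : u = a := by
  rcases a with _ | _ <;> rcases u with _ | _ <;> simp_all [Between, le_antisymm_iff]

lemma Between.trans_left {a b u g : Coll m n} (hu : Between a b u) (hg : Between a u g) :
    Between a b g := by
  rcases a with a | a <;> rcases b with b | b <;> rcases u with u | u <;> rcases g with g | g <;>
    first | contradiction | exact Set.uIcc_subset_uIcc_left hu hg

lemma Between.of_not_between {c d y g : Coll m n} (hg : Between c y g)
    (hd : d.isLeft = g.isLeft) (hdg : ¬ Between d y g) : Between c d g := by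
  rcases c with c | c <;> rcases d with d | d <;> rcases y with y | y <;> rcases g with g | g <;>
    first
      | contradiction
      | exact (Set.uIcc_subset_uIcc_union_uIcc hg).resolve_right hdg

end Kinds

section Links
variable {m n : ℕ} {R T : Coll m n → Coll m n → Prop}

lemma isLink_comm {x y z : Coll m n} (hxy : x.isLeft = y.isLeft) :
    IsLink R x y z ↔ IsLink R y x z := by
  simp only [IsLink, orthogonal_iff, hxy, or_comm]

lemma IsLink.extend [IsTrans (Coll m n) R] (hTR : T ≤ R) {x y c d z : Coll m n}
    (hxc : R x c) (hxd : R x d) (hcy : R c y) (hdy : R d y) (hkind : x.isLeft = c.isLeft)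
    (h : IsLink T c d z) : IsLink R x y z := by
  obtain ⟨hcz, ⟨hc, hd⟩ | ⟨hd, hc⟩⟩ := h
  · exact ⟨orthogonal_iff.2 (hkind ▸ orthogonal_iff.1 hcz),
      Or.inl ⟨_root_.trans hxc (hTR _ _ hc), _root_.trans (hTR _ _ hd) hdy⟩⟩
  · exact ⟨orthogonal_iff.2 (hkind ▸ orthogonal_iff.1 hcz),
      Or.inl ⟨_root_.trans hxd (hTR _ _ hd), _root_.trans (hTR _ _ hc) hcy⟩⟩

lemma IsGap.symm {x y g : Coll m n} (h : IsGap R x y g) : IsGap R y x g :=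
  ⟨h.1.symm, h.2.2, h.2.1⟩

end Links

namespace IsGoodRect
variable {m n : ℕ} {T : Coll m n → Coll m n → Prop}

lemma exists_isGap (hT : IsGoodRect T) {x y : Coll m n} (hxy : Parallel x y)
    (h₁ : ¬ T x y) (h₂ : ¬ T y x) : ∃ g, IsGap T x y g :=
  not_not.1 fun h => not_or.2 ⟨h₁, h₂⟩ ((hT.par x y hxy).2 (Or.inr h))

lemma not_isGap (hT : IsGoodRect T) {x y : Coll m n} (hxy : Parallel x y) (h : T x y)
    (hnl : ¬ ∃ z, IsLink T x y z) : ¬ ∃ g, IsGap T x y g :=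
  ((hT.par x y hxy).1 (Or.inl h)).resolve_left hnl

lemma wellFounded_strictR_swap (hT : IsGoodRect T) : WellFounded (flip (StrictR T)) :=
  haveI : IsTrans (Coll m n) (flip (StrictR T)) :=
    ⟨fun _ _ _ h₁ h₂ => ⟨hT.trans _ _ _ h₂.1 h₁.1, fun h => h₂.2 (hT.trans _ _ _ h₁.1 h)⟩⟩
  haveI : Std.Irrefl (flip (StrictR T)) := ⟨fun _ h => h.2 h.1⟩
  Finite.wellFounded_of_trans_of_irrefl _

/-- A `T`-maximal counterexample `u` is incomparable to `a` or to `b`, and the gap separating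
them is a larger counterexample. -/
lemma le_or_le_of_between_of_not_isGap (hT : IsGoodRect T) {a b : Coll m n}
    (hng : ¬ ∃ g, IsGap T a b g) {u : Coll m n} (hu : Between a b u) : T u a ∨ T u b := by
  induction u using hT.wellFounded_strictR_swap.induction with
  | _ u ih =>
  by_contra! ⟨hua, hub⟩
  have hne {c : Coll m n} (h : ¬ T u c) : c ≠ u := by rintro rfl; exact h (hT.refl c)
  rcases not_and_or.1 fun h => hng ⟨u, hu, ⟨h.1, hua⟩, ⟨h.2, hub⟩⟩ with hau | hbu
  · obtain ⟨g, hg, ⟨-, hga⟩, hug⟩ :=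
      hT.exists_isGap (parallel_iff.2 ⟨hu.isLeft_eq.1, hne hua⟩) hau hua
    exact (ih g hug (hu.trans_left hg)).elim hga fun h => hub (hT.trans _ _ _ hug.1 h)
  · obtain ⟨g, hg, ⟨-, hgb⟩, hug⟩ :=
      hT.exists_isGap (parallel_iff.2 ⟨hu.isLeft_eq.2, hne hub⟩) hbu hub
    exact (ih g hug (hu.symm.trans_left hg).symm).elim
      (fun h => hua (hT.trans _ _ _ hug.1 h)) hgb

lemma le_or_le_of_between (hT : IsGoodRect T) {c d g : Coll m n} (hcd : T c d)
    (hnl : ¬ ∃ z, IsLink T c d z) (hg : Between c d g) : T g c ∨ T g d := by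
  rcases eq_or_ne c d with rfl | hne
  · exact .inl (hg.eq_of_self ▸ hT.refl c)
  · have hpar : Parallel c d := parallel_iff.2 ⟨hg.isLeft_eq.1.trans hg.isLeft_eq.2.symm, hne⟩
    exact hT.le_or_le_of_between_of_not_isGap (hT.not_isGap hpar hcd hnl) hg

lemma exists_isGap_of_le {R : Coll m n → Coll m n → Prop} [IsTrans (Coll m n) R]
    (hT : IsGoodRect T) (hTR : T ≤ R) {x y : Coll m n} (hxy : Parallel x y)
    (h₁ : ¬ R x y) (h₂ : ¬ R y x) : ∃ g, IsGap R x y g := by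
  obtain ⟨g, hg, ⟨hxg, -⟩, hyg, -⟩ :=
    hT.exists_isGap hxy (fun h => h₁ (hTR _ _ h)) (fun h => h₂ (hTR _ _ h))
  exact ⟨g, hg, ⟨hTR _ _ hxg, fun h => h₂ (_root_.trans (hTR _ _ hyg) h)⟩,
    hTR _ _ hyg, fun h => h₁ (_root_.trans (hTR _ _ hxg) h)⟩

end IsGoodRect

lemma le_right_of_between_of_not_isLink {m n : ℕ} {S R : Coll m n → Coll m n → Prop} [Std.Refl R]
    [IsTrans (Coll m n) R] (hS : ∀ a b, S a b → ∃ T, IsGoodRect T ∧ T ≤ R ∧ T a b)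
    {x y g : Coll m n} (hnl : ¬ ∃ z, IsLink R x y z) (hxg : x.isLeft = g.isLeft) {c : Coll m n}
    (hcy : Relation.ReflTransGen S c y) (hxc : R x c) (hcg : Between c y g) : R g y := by
  have hSR : S ≤ R := fun a b h => by obtain ⟨T, -, hTR, hT⟩ := hS a b h; exact hTR a b hT
  induction hcy using Relation.ReflTransGen.head_induction_on with
  | refl => rw [hcg.eq_of_self]; exact refl y
  | @head c d hcd hdy ih =>
    obtain ⟨T, hT, hTR, hcd⟩ := hS c d hcd
    have hxd : R x d := _root_.trans hxc (hTR c d hcd)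
    replace hdy : R d y := Relation.reflTransGen_le_of_le hSR d y hdy
    have hcy : R c y := _root_.trans (hTR c d hcd) hdy
    by_cases hxd' : Orthogonal x d
    · exact (hnl ⟨d, hxd', .inl ⟨hxd, hdy⟩⟩).elim
    rw [orthogonal_iff, not_ne_iff] at hxd'
    by_cases hdg : Between d y g
    · exact ih hxd hdg
    have hTnl : ¬ ∃ z, IsLink T c d z := fun ⟨z, hz⟩ =>
      hnl ⟨z, hz.extend hTR hxc hxd hcy hdy (hxg.trans hcg.isLeft_eq.1.symm)⟩
    rcases hT.le_or_le_of_between hcd hTnl (hcg.of_not_between (hxd'.symm.trans hxg) hdg)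
      with hgc | hgd
    · exact _root_.trans (hTR g c hgc) hcy
    · exact _root_.trans (hTR g d hgd) hdy

/-- The transitive closure of the union of two good rectangular preorders is again a good
rectangular preorder. -/
theorem transClosure_union_isGoodRect {m n : ℕ}
    (P Q : Coll m n → Coll m n → Prop)
    (hP : IsGoodRect P) (hQ : IsGoodRect Q) :
    IsGoodRect (Relation.TransGen fun x y => P x y ∨ Q x y) := by
  set R := Relation.TransGen fun x y => P x y ∨ Q x y
  have hPR : P ≤ R := fun _ _ h => .single (.inl h)
  have hQR : Q ≤ R := fun _ _ h => .single (.inr h)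
  have : Std.Refl R := ⟨fun x => hPR x x (hP.refl x)⟩
  have hS : ∀ a b, P a b ∨ Q a b → ∃ T, IsGoodRect T ∧ T ≤ R ∧ T a b := by
    rintro a b (h | h)
    exacts [⟨P, hP, hPR, h⟩, ⟨Q, hQ, hQR, h⟩]
  have no_gap {x y g} (hxy : R x y) (hnl : ¬ ∃ z, IsLink R x y z) (hg : IsGap R x y g) :
      False :=
    hg.2.2.2 (le_right_of_between_of_not_isLink hS hnl hg.1.isLeft_eq.1 hxy.to_reflTransGen
      (refl x) hg.1)
  refine ⟨refl, fun _ _ _ => .trans, fun x y h => (hP.orth x y h).imp (hPR x y) (hPR y x),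
    fun x y hxy => ⟨?_, ?_⟩⟩
  · refine fun hxy' => or_iff_not_imp_left.2 fun hnl ⟨g, hg⟩ => hxy'.elim ?_ ?_
    · exact fun h => no_gap h hnl hg
    · refine fun h => no_gap h (fun ⟨z, hz⟩ => hnl ⟨z, ?_⟩) hg.symm
      exact (isLink_comm (parallel_iff.1 hxy).1).2 hz
  · rintro (⟨z, -, h⟩ | hng)
    · exact h.imp (fun h => h.1.trans h.2) (fun h => h.1.trans h.2)
    · by_contra! hnc
      exact hng (hP.exists_isGap_of_le hPR hxy hnc.1 hnc.2)
end

section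
/- A good rectangular preorder P on Coll(m,n) in which the equivalence relation (x ≡ y iff x ≤ y and y ≤ x) is trivial (equivalence implies equality, so P is a partial order) is join-irreducible in the lattice C(m,n) ∪ {-1}: if P is the join (transitive closure of the union) of two good rectangular preorders Q and Q', then P = Q or P = Q'. -/
/-- A good rectangular preorder which is a partial order (equivalence implies equality)
is join-irreducible: if it is the join (transitive closure of the union) of two good
rectangular preorders, it equals one of them. -/
theorem vertex_join_irreducible {m n : ℕ}
    (P : Coll m n → Coll m n → Prop) (hP : IsGoodRect P)
    (hpo : ∀ x y, P x y → P y x → x = y)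
    (Q Q' : Coll m n → Coll m n → Prop)
    (hQ : IsGoodRect Q) (hQ' : IsGoodRect Q')
    (hjoin : P = Relation.TransGen fun x y => Q x y ∨ Q' x y) :
    P = Q ∨ P = Q' := by
  left
  have hQP : ∀ x y, Q x y → P x y := by
    intro x y h; rw [hjoin]; exact Relation.TransGen.single (Or.inl h)
  have horthne : ∀ a b : Coll m n, Orthogonal a b → a ≠ b := by
    intro a b hab
    cases a <;> cases b <;> simp [Orthogonal] at hab ⊢
  have hosymm : ∀ a b : Coll m n, Orthogonal a b → Orthogonal b a := by
    intro a b hab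
    cases a <;> cases b <;> simp [Orthogonal] at hab ⊢
  have hOtrans : ∀ a b : Coll m n, Orthogonal a b → P a b → Q a b := by
    intro a b hab hpab
    rcases hQ.orth a b hab with h | h
    · exact h
    · exact absurd (hpo a b hpab (hQP b a h)) (horthne a b hab)
  have hpara : ∀ x y : Coll m n, Parallel x y → P x y → Q x y := by
    intro x y hxy hpxy
    by_contra hq
    have hne : x ≠ y := by rintro rfl; exact hq (hQ.refl x)
    have hqyx : ¬ Q y x := fun h => hne (hpo x y hpxy (hQP y x h))
    have hincomp : ¬ (Q x y ∨ Q y x) := by tauto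
    rw [hQ.par x y hxy] at hincomp
    push_neg at hincomp
    obtain ⟨hnolink, g, hBet, hsx, hsy⟩ := hincomp
    have hgapP : ∃ g, IsGap P x y g := by
      refine ⟨g, hBet, ⟨hQP _ _ hsx.1, ?_⟩, ⟨hQP _ _ hsy.1, ?_⟩⟩
      · intro h
        have hxg : x = g := hpo x g (hQP _ _ hsx.1) h
        exact hsx.2 (hxg ▸ hQ.refl g)
      · intro h
        have hyg : y = g := hpo y g (hQP _ _ hsy.1) h
        exact hsy.2 (hyg ▸ hQ.refl g)
    rcases (hP.par x y hxy).mp (Or.inl hpxy) with ⟨z, hoxz, hch⟩ | hnog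
    · have hozy : Orthogonal z y := by
        clear hjoin hgapP hch hnolink
        cases x <;> cases y <;> cases z <;>
          simp [Orthogonal, Parallel] at hxy hoxz ⊢
      refine hnolink z ⟨hoxz, ?_⟩
      rcases hch with ⟨h1, h2⟩ | ⟨h1, h2⟩
      · exact Or.inl ⟨hOtrans _ _ hoxz h1, hOtrans _ _ hozy h2⟩
      · exact Or.inr ⟨hOtrans _ _ (hosymm _ _ hozy) h1,
          hOtrans _ _ (hosymm _ _ hoxz) h2⟩
    · exact absurd hgapP hnog
  have hmain : ∀ x y, P x y → Q x y := by
    intro x y hxy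
    by_cases hne : x = y
    · subst hne; exact hQ.refl x
    match x, y with
    | Sum.inl i, Sum.inl j =>
      exact hpara _ _ (by simpa [Parallel] using fun h => hne (by rw [h])) hxy
    | Sum.inl i, Sum.inr j => exact hOtrans _ _ trivial hxy
    | Sum.inr i, Sum.inl j => exact hOtrans _ _ trivial hxy
    | Sum.inr i, Sum.inr j =>
      exact hpara _ _ (by simpa [Parallel] using fun h => hne (by rw [h])) hxy
  exact funext fun x => funext fun y => propext ⟨hmain x y, hQP x y⟩
end

section
/- A good rectangular preorder on Coll(m,n) with exactly two equivalence classes is meet-irreducible in C(m,n): if it equals the intersection of two good rectangular preorders Q and Q', then it equals Q or Q'. -/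
/-- If both cross-class directions fail for a two-class good preorder, we get a
contradiction: orthogonal pairs must be comparable, and parallel incomparable pairs
would need a gap, but a gap would be strictly above its own class representative. -/
lemma hard_aux {m n : ℕ} (P : Coll m n → Coll m n → Prop) (hP : IsGoodRect P)
    (a b x y u v : Coll m n)
    (hab : ¬ (P a b ∧ P b a))
    (hcls : ∀ w, (P w a ∧ P a w) ∨ (P w b ∧ P b w))
    (hx : P x a ∧ P a x) (hy : P y b ∧ P b y)
    (hu : P u b ∧ P b u) (hv : P v a ∧ P a v)
    (hxy : ¬ P x y) (huv : ¬ P u v) : False := by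
  have nc1 : ∀ s t, (P s a ∧ P a s) → (P t b ∧ P b t) → ¬ P s t := by
    intro s t hs ht hst
    exact hxy (hP.trans _ _ _ (hP.trans _ _ _ (hP.trans _ _ _ hx.1 hs.2) hst)
      (hP.trans _ _ _ ht.1 hy.2))
  have nc2 : ∀ s t, (P s b ∧ P b s) → (P t a ∧ P a t) → ¬ P s t := by
    intro s t hs ht hst
    exact huv (hP.trans _ _ _ (hP.trans _ _ _ (hP.trans _ _ _ hu.1 hs.2) hst)
      (hP.trans _ _ _ ht.1 hv.2))
  have hyx : ¬ P y x := nc2 y x hy hx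
  have hne : x ≠ y := by
    intro h; subst h
    exact hab ⟨hP.trans _ _ _ hx.2 hy.1, hP.trans _ _ _ hy.2 hx.1⟩
  have hgap : Parallel x y → False := by
    intro hpar
    have hnR : ¬ ((∃ z, IsLink P x y z) ∨ ¬ ∃ g, IsGap P x y g) :=
      fun hr => ((hP.par _ _ hpar).mpr hr).elim hxy hyx
    push_neg at hnR
    obtain ⟨-, g, -, ⟨hxg, hgx⟩, ⟨hyg, hgy⟩⟩ := hnR
    rcases hcls g with hg | hg
    · exact hgx (hP.trans _ _ _ hg.1 hx.2)
    · exact hgy (hP.trans _ _ _ hg.1 hy.2)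
  rcases x with i | i <;> rcases y with j | j
  · exact hgap (fun h => hne (congrArg Sum.inl h))
  · exact (hP.orth (Sum.inl i) (Sum.inr j) trivial).elim hxy hyx
  · exact (hP.orth (Sum.inr i) (Sum.inl j) trivial).elim hxy hyx
  · exact hgap (fun h => hne (congrArg Sum.inr h))

/-- A good rectangular preorder with exactly two equivalence classes is meet-irreducible:
if it is the intersection of two good rectangular preorders, it equals one of them. -/
theorem facet_meet_irreducible {m n : ℕ}
    (P : Coll m n → Coll m n → Prop) (hP : IsGoodRect P)
    (htwo : ∃ a b : Coll m n, ¬ (P a b ∧ P b a) ∧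
      ∀ x : Coll m n, (P x a ∧ P a x) ∨ (P x b ∧ P b x))
    (Q Q' : Coll m n → Coll m n → Prop)
    (hQ : IsGoodRect Q) (hQ' : IsGoodRect Q')
    (hmeet : P = fun x y => Q x y ∧ Q' x y) :
    P = Q ∨ P = Q' := by
  have hPdef : ∀ x y, P x y ↔ Q x y ∧ Q' x y := fun x y => by rw [hmeet]
  obtain ⟨a, b, hab, hcls⟩ := htwo
  by_contra hcon
  push_neg at hcon
  obtain ⟨hne1, hne2⟩ := hcon
  have h1 : ∃ x y, Q x y ∧ ¬ P x y := by
    by_contra h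
    push_neg at h
    exact hne1 (funext fun x => funext fun y =>
      propext ⟨fun hp => ((hPdef x y).mp hp).1, h x y⟩)
  have h2 : ∃ x y, Q' x y ∧ ¬ P x y := by
    by_contra h
    push_neg at h
    exact hne2 (funext fun x => funext fun y =>
      propext ⟨fun hp => ((hPdef x y).mp hp).2, h x y⟩)
  obtain ⟨x, y, hQxy, hPxy⟩ := h1
  obtain ⟨u, v, hQ'uv, hPuv⟩ := h2
  have hQ'xy : ¬ Q' x y := fun h => hPxy ((hPdef x y).mpr ⟨hQxy, h⟩)
  have hQuv : ¬ Q u v := fun h => hPuv ((hPdef u v).mpr ⟨h, hQ'uv⟩)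
  have hPQ : ∀ s t, P s t → Q s t := fun s t h => ((hPdef s t).mp h).1
  rcases hcls x with hx | hx <;> rcases hcls y with hy | hy
  · exact hPxy (hP.trans _ _ _ hx.1 hy.2)
  · -- x ~ a, y ~ b
    rcases hcls u with hu | hu <;> rcases hcls v with hv | hv
    · exact hPuv (hP.trans _ _ _ hu.1 hv.2)
    · exact hQuv (hQ.trans _ _ _ (hQ.trans _ _ _
        (hPQ _ _ (hP.trans _ _ _ hu.1 hx.2)) hQxy)
        (hPQ _ _ (hP.trans _ _ _ hy.1 hv.2)))
    · exact hard_aux P hP a b x y u v hab hcls hx hy hu hv hPxy hPuv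
    · exact hPuv (hP.trans _ _ _ hu.1 hv.2)
  · -- x ~ b, y ~ a
    rcases hcls u with hu | hu <;> rcases hcls v with hv | hv
    · exact hPuv (hP.trans _ _ _ hu.1 hv.2)
    · exact hard_aux P hP b a x y u v (fun h => hab ⟨h.2, h.1⟩)
        (fun w => (hcls w).symm) hx hy hu hv hPxy hPuv
    · exact hQuv (hQ.trans _ _ _ (hQ.trans _ _ _
        (hPQ _ _ (hP.trans _ _ _ hu.1 hx.2)) hQxy)
        (hPQ _ _ (hP.trans _ _ _ hy.1 hv.2)))
    · exact hPuv (hP.trans _ _ _ hu.1 hv.2)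
  · exact hPxy (hP.trans _ _ _ hx.1 hy.2)
end

section
/- Every edge preorder in C(m,n) refines exactly two vertex preorders: if E is a good rectangular preorder whose unique nontrivial equivalence class is {a,b} with all other classes singletons, then there exist exactly two good rectangular preorders which are partial orders (vertex preorders) refined by E. -/
namespace EdgeTwo

variable {m n : ℕ}

/-- The kind (vertical / horizontal) of a collision. -/
def kind : Coll m n → Bool
  | Sum.inl _ => true
  | Sum.inr _ => false

/-- The index of a collision, as a natural number. -/
def idx : Coll m n → ℕ
  | Sum.inl i => i.val
  | Sum.inr j => j.val

lemma eq_iff_kind_idx {x y : Coll m n} : x = y ↔ (kind x = kind y ∧ idx x = idx y) := by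
  rcases x with x | x <;> rcases y with y | y <;>
    simp [kind, idx, Fin.ext_iff]

lemma orth_iff {x y : Coll m n} : Orthogonal x y ↔ kind x ≠ kind y := by
  rcases x with x | x <;> rcases y with y | y <;> simp [Orthogonal, kind]

lemma par_iff {x y : Coll m n} : Parallel x y ↔ (kind x = kind y ∧ x ≠ y) := by
  rcases x with x | x <;> rcases y with y | y <;>
    simp [Parallel, kind, Fin.ext_iff, ne_eq]

lemma between_iff {x y g : Coll m n} :
    Between x y g ↔ (kind x = kind g ∧ kind y = kind g ∧
      min (idx x) (idx y) ≤ idx g ∧ idx g ≤ max (idx x) (idx y)) := by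
  rcases x with x | x <;> rcases y with y | y <;> rcases g with g | g <;>
    simp only [Between, kind, idx, min_le_iff, le_max_iff, Fin.le_def, true_and,
      false_iff, iff_false, Bool.true_eq_false, Bool.false_eq_true, false_and, and_false,
      not_false_eq_true, not_and, iff_true] <;> omega

lemma par_symm {x y : Coll m n} (h : Parallel x y) : Parallel y x := by
  rw [par_iff] at *; exact ⟨h.1.symm, h.2.symm⟩

lemma par_ne {x y : Coll m n} (h : Parallel x y) : x ≠ y := (par_iff.mp h).2

lemma orth_symm {x y : Coll m n} (h : Orthogonal x y) : Orthogonal y x := by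
  rw [orth_iff] at *; exact h.symm

lemma orth_ne {x y : Coll m n} (h : Orthogonal x y) : x ≠ y := by
  rw [orth_iff] at h; exact fun e => h (e ▸ rfl)

lemma not_orth_of_par {x y : Coll m n} (h : Parallel x y) : ¬ Orthogonal x y := by
  rw [par_iff] at h; rw [orth_iff]; exact fun h' => h' h.1

lemma orth_of_par_orth {x y z : Coll m n} (hxy : Parallel x y) (h : Orthogonal y z) :
    Orthogonal x z := by
  rw [par_iff] at hxy; rw [orth_iff] at *; exact hxy.1 ▸ h

lemma ne_of_orth_par {x y z : Coll m n} (hxz : Orthogonal x z) (hxy : Parallel x y) :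
    z ≠ y := by
  rw [orth_iff] at hxz; rw [par_iff] at hxy
  exact fun e => hxz (by rw [hxy.1, e])

lemma between_symm {x y g : Coll m n} (h : Between x y g) : Between y x g := by
  simp only [between_iff] at *; exact ⟨h.2.1, h.1, by omega, by omega⟩

lemma between_split {x y z g : Coll m n} (hk : kind x = kind y) (h : Between x z g) :
    Between x y g ∨ Between y z g := by
  simp only [between_iff] at *
  rcases h with ⟨h1, h2, h3, h4⟩
  by_cases hc : min (idx x) (idx y) ≤ idx g ∧ idx g ≤ max (idx x) (idx y)
  · exact Or.inl ⟨h1, hk.symm.trans h1, hc.1, hc.2⟩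
  · exact Or.inr ⟨hk.symm.trans h1, h2, by omega, by omega⟩

lemma between_collapse {p q g r : Coll m n} (h1 : Between p q g) (h2 : Between p g r) :
    Between p q r := by
  simp only [between_iff] at *
  obtain ⟨k1, k2, b1, b2⟩ := h1
  obtain ⟨k3, k4, b3, b4⟩ := h2
  exact ⟨k3, k2.trans (k1.symm.trans k3), by omega, by omega⟩

lemma par_of_between {x y g : Coll m n} (h : Between x y g) (hne : y ≠ g) :
    Parallel y g := by
  simp only [between_iff] at h; exact par_iff.mpr ⟨h.2.1, hne⟩

/-- distance between indices -/
def span (x y : Coll m n) : ℕ := (idx x - idx y) + (idx y - idx x)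

lemma span_comm (x y : Coll m n) : span x y = span y x := by simp [span]; omega

lemma span_pos_of_par {x y : Coll m n} (h : Parallel x y) : 0 < span x y := by
  rw [par_iff] at h
  have : idx x ≠ idx y := fun e => h.2 (eq_iff_kind_idx.mpr ⟨h.1, e⟩)
  simp [span]; omega

lemma span_lt_of_between {x y g : Coll m n} (h : Between x y g)
    (hgx : g ≠ x) (hgy : g ≠ y) : span x g < span x y ∧ span y g < span x y := by
  simp only [between_iff] at h
  have h1 : idx g ≠ idx x := fun e => hgx (eq_iff_kind_idx.mpr ⟨h.1.symm, e⟩)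
  have h2 : idx g ≠ idx y := fun e => hgy (eq_iff_kind_idx.mpr ⟨h.2.1.symm, e⟩)
  simp [span]; omega


/-- Hypotheses on an edge preorder, with chosen tie `(a,b)`. -/
structure TieH (E : Coll m n → Coll m n → Prop) (a b : Coll m n) : Prop where
  good : IsGoodRect E
  tie_ne : a ≠ b
  ab : E a b
  ba : E b a
  uniq : ∀ x y : Coll m n, x ≠ y → E x y → E y x → (x = a ∧ y = b) ∨ (x = b ∧ y = a)

lemma TieH.symm {E : Coll m n → Coll m n → Prop} {a b : Coll m n} (h : TieH E a b) :
    TieH E b a :=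
  ⟨h.good, h.tie_ne.symm, h.ba, h.ab, fun x y hxy h1 h2 => (h.uniq x y hxy h1 h2).symm⟩

/-- The preorder `E` with the comparison `a ≤ b` removed. -/
def W (E : Coll m n → Coll m n → Prop) (a b : Coll m n) (x y : Coll m n) : Prop :=
  E x y ∧ ¬(x = a ∧ y = b)

/-- Parallel pairs whose comparability must be dropped when breaking the tie. -/
def Bad (E : Coll m n → Coll m n → Prop) (a b : Coll m n) (x y : Coll m n) : Prop :=
  Parallel x y ∧ (¬ ∃ z, IsLink (W E a b) x y z) ∧ (∃ g, IsGap (W E a b) x y g)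

/-- The vertex preorder obtained from the edge preorder `E` by breaking the tie,
keeping `b ≤ a`. -/
def V (E : Coll m n → Coll m n → Prop) (a b : Coll m n) (x y : Coll m n) : Prop :=
  W E a b x y ∧ ¬ Bad E a b x y

section Tie

variable {E : Coll m n → Coll m n → Prop} {a b : Coll m n} (h : TieH E a b)

include h

omit h in
lemma W_sub {x y : Coll m n} (hw : W E a b x y) : E x y := hw.1

lemma Wrefl (x : Coll m n) : W E a b x x :=
  ⟨h.good.refl x, fun ⟨h1, h2⟩ => h.tie_ne (h1 ▸ h2 ▸ rfl)⟩

lemma Wtrans {x y z : Coll m n} (h1 : W E a b x y) (h2 : W E a b y z) : W E a b x z := by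
  refine ⟨h.good.trans x y z h1.1 h2.1, ?_⟩
  rintro ⟨hxa, hzb⟩
  by_cases hya : y = a
  · exact h2.2 ⟨hya, hzb⟩
  · by_cases hyb : y = b
    · exact h1.2 ⟨hxa, hyb⟩
    · -- y distinct from a and b, but a ≤ y ≤ b and b ≤ a force equivalence
      have hEay : E a y := hxa ▸ h1.1
      have hEyb : E y b := hzb ▸ h2.1
      have hEya : E y a := h.good.trans y b a hEyb h.ba
      rcases h.uniq a y (fun e => hya e.symm) hEay hEya with ⟨_, e⟩ | ⟨e, _⟩
      · exact hyb e
      · exact h.tie_ne e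

lemma Wantisymm {x y : Coll m n} (h1 : W E a b x y) (h2 : W E a b y x) : x = y := by
  by_contra hne
  rcases h.uniq x y hne h1.1 h2.1 with ⟨e1, e2⟩ | ⟨e1, e2⟩
  · exact h1.2 ⟨e1, e2⟩
  · exact h2.2 ⟨e2, e1⟩

lemma comp_W_of_E {x y : Coll m n} (hc : E x y ∨ E y x) : W E a b x y ∨ W E a b y x := by
  have hWba : W E a b b a := ⟨h.ba, fun ⟨e1, _⟩ => h.tie_ne e1.symm⟩
  rcases hc with h1 | h1
  · by_cases he : x = a ∧ y = b
    · exact Or.inr (by rw [he.1, he.2]; exact hWba)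
    · exact Or.inl ⟨h1, he⟩
  · by_cases he : y = a ∧ x = b
    · exact Or.inl (by rw [he.1, he.2]; exact hWba)
    · exact Or.inr ⟨h1, he⟩

omit h in
lemma comp_E_of_W {x y : Coll m n} (hc : W E a b x y ∨ W E a b y x) : E x y ∨ E y x :=
  hc.imp (fun h1 => h1.1) (fun h1 => h1.1)

lemma strictW_of_strictE {x y : Coll m n} (hs : StrictR E x y) : StrictR (W E a b) x y := by
  refine ⟨⟨hs.1, ?_⟩, fun hc => hs.2 hc.1⟩
  rintro ⟨rfl, rfl⟩
  exact hs.2 h.ba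

omit h in
lemma strictW_cases {x y : Coll m n} (hs : StrictR (W E a b) x y) :
    StrictR E x y ∨ (x = b ∧ y = a) := by
  by_cases hEyx : E y x
  · right
    have := hs.2
    rw [W] at this
    push_neg at this
    rcases this hEyx with ⟨e1, e2⟩
    exact ⟨e2, e1⟩
  · exact Or.inl ⟨hs.1.1, hEyx⟩

lemma strictW_trans {x y z : Coll m n} (h1 : StrictR (W E a b) x y)
    (h2 : StrictR (W E a b) y z) : StrictR (W E a b) x z :=
  ⟨Wtrans h h1.1 h2.1, fun hc => h2.2 (Wtrans h hc h1.1)⟩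

lemma gapW_of_gapE {x y g : Coll m n} (hg : IsGap E x y g) : IsGap (W E a b) x y g :=
  ⟨hg.1, strictW_of_strictE h hg.2.1, strictW_of_strictE h hg.2.2⟩

omit h in
lemma linkE_of_linkW {x y z : Coll m n} (hl : IsLink (W E a b) x y z) : IsLink E x y z :=
  ⟨hl.1, hl.2.imp (fun ⟨u, v⟩ => ⟨u.1, v.1⟩) (fun ⟨u, v⟩ => ⟨u.1, v.1⟩)⟩

/-- For a `W`-incomparable parallel pair there is a `W`-gap and no `W`-link. -/
lemma incomp_structure {x y : Coll m n} (hpar : Parallel x y)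
    (h1 : ¬ W E a b x y) (h2 : ¬ W E a b y x) :
    (¬ ∃ z, IsLink (W E a b) x y z) ∧ (∃ g, IsGap (W E a b) x y g) := by
  have hcE : ¬ (E x y ∨ E y x) := fun hc => (comp_W_of_E h hc).elim h1 h2
  have := (h.good.par x y hpar).not.mp hcE
  push_neg at this
  rcases this with ⟨hnl, hgap⟩
  obtain ⟨g, hg⟩ := hgap
  exact ⟨fun ⟨z, hz⟩ => hnl z (linkE_of_linkW hz), ⟨g, gapW_of_gapE h hg⟩⟩

omit h in
lemma bad_par {x y : Coll m n} (hb : Bad E a b x y) : Parallel x y := hb.1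

omit h in
lemma link_symm {R : Coll m n → Coll m n → Prop} {x y z : Coll m n}
    (hpar : Parallel x y) (hl : IsLink R x y z) : IsLink R y x z :=
  ⟨orth_of_par_orth (par_symm hpar) hl.1, hl.2.symm⟩

omit h in
lemma gap_symm {R : Coll m n → Coll m n → Prop} {x y g : Coll m n}
    (hg : IsGap R x y g) : IsGap R y x g :=
  ⟨between_symm hg.1, hg.2.2, hg.2.1⟩

omit h in
lemma bad_symm {x y : Coll m n} (hb : Bad E a b x y) : Bad E a b y x := by
  obtain ⟨hpar, hnl, g, hg⟩ := hb
  exact ⟨par_symm hpar, fun ⟨z, hz⟩ => hnl ⟨z, link_symm (par_symm hpar) hz⟩,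
    ⟨g, gap_symm hg⟩⟩

/-- In a chain `x ≤ y ≤ z` with no link for `(x,z)` and `(x,y)` not bad,
there is no gap for `(x,y)`. -/
lemma no_gap_of_chain {x y z : Coll m n} (hpxy : Parallel x y)
    (hnbad : ¬ Bad E a b x y) (hWxy : W E a b x y) (hWyz : W E a b y z)
    (hnl : ¬ ∃ z₀, IsLink (W E a b) x z z₀) :
    ∀ g, ¬ IsGap (W E a b) x y g := by
  intro g hg
  have hlink : ∃ z₀, IsLink (W E a b) x y z₀ := by
    by_contra hc
    exact hnbad ⟨hpxy, hc, ⟨g, hg⟩⟩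
  obtain ⟨z₀, horth, hcase⟩ := hlink
  rcases hcase with ⟨h1, h2⟩ | ⟨h1, h2⟩
  · exact hnl ⟨z₀, horth, Or.inl ⟨h1, Wtrans h h2 hWyz⟩⟩
  · -- y ≤ z₀ ≤ x together with x ≤ y forces z₀ = y, impossible by kinds
    have hz0y : W E a b z₀ y := Wtrans h h2 hWxy
    exact ne_of_orth_par horth hpxy (Wantisymm h hz0y h1)

/-- In a chain `x ≤ y ≤ z` with no link for `(x,z)` and `(y,z)` not bad,
there is no gap for `(y,z)`. -/
lemma no_gap_of_chain' {x y z : Coll m n} (hpxy : Parallel x y) (hpyz : Parallel y z)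
    (hnbad : ¬ Bad E a b y z) (hWxy : W E a b x y) (hWyz : W E a b y z)
    (hnl : ¬ ∃ z₀, IsLink (W E a b) x z z₀) :
    ∀ g, ¬ IsGap (W E a b) y z g := by
  intro g hg
  have hlink : ∃ z₀, IsLink (W E a b) y z z₀ := by
    by_contra hc
    exact hnbad ⟨hpyz, hc, ⟨g, hg⟩⟩
  obtain ⟨z₀, horth, hcase⟩ := hlink
  rcases hcase with ⟨h1, h2⟩ | ⟨h1, h2⟩
  · exact hnl ⟨z₀, orth_of_par_orth hpxy horth, Or.inl ⟨Wtrans h hWxy h1, h2⟩⟩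
  · have hz0z : W E a b z₀ z := Wtrans h h2 hWyz
    exact ne_of_orth_par horth hpyz (Wantisymm h hz0z h1)

lemma V_trans {x y z : Coll m n} (hxy : V E a b x y) (hyz : V E a b y z) :
    V E a b x z := by
  refine ⟨Wtrans h hxy.1 hyz.1, ?_⟩
  rintro ⟨hpar, hnl, g, hgap⟩
  by_cases hxy' : x = y
  · exact hyz.2 ⟨hxy' ▸ hpar, hxy' ▸ hnl, ⟨g, hxy' ▸ hgap⟩⟩
  by_cases hyz' : y = z
  · exact hxy.2 ⟨hyz' ▸ hpar, hyz' ▸ hnl, ⟨g, hyz' ▸ hgap⟩⟩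
  by_cases hk : kind x = kind y
  case neg =>
    exact hnl ⟨y, orth_iff.mpr hk, Or.inl ⟨hxy.1, hyz.1⟩⟩
  case pos =>
  have hpxy : Parallel x y := par_iff.mpr ⟨hk, hxy'⟩
  have hpyz : Parallel y z := par_iff.mpr
    ⟨hk.symm.trans (par_iff.mp hpar).1, hyz'⟩
  obtain ⟨hbtw, hsxg, hszg⟩ := hgap
  have hWgy : ¬ W E a b g y := fun hgy' => hszg.2 (Wtrans h hgy' hyz.1)
  rcases between_split hk hbtw with hpos | hpos
  · by_cases hWyg : W E a b y g
    · exact no_gap_of_chain h hpxy hxy.2 hxy.1 hyz.1 hnl g ⟨hpos, hsxg, hWyg, hWgy⟩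
    · -- y and g incomparable: E gives a gap h' for (y,g)
      have hgy : g ≠ y := fun e => hWyg (e ▸ Wrefl h y)
      have hpyg : Parallel y g :=
        par_iff.mpr ⟨hk.symm.trans (between_iff.mp hbtw).1, fun e => hgy e.symm⟩
      obtain ⟨-, g', hbtw', hsy, hsg⟩ := incomp_structure h hpyg hWyg hWgy
      have hsxg' : StrictR (W E a b) x g' :=
        ⟨Wtrans h hsxg.1 hsg.1, fun hc => hsg.2 (Wtrans h hc hsxg.1)⟩
      have hbtw'' : Between x y g' :=
        between_symm (between_collapse (between_symm hpos) hbtw')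
      exact no_gap_of_chain h hpxy hxy.2 hxy.1 hyz.1 hnl g' ⟨hbtw'', hsxg', hsy⟩
  · by_cases hWyg : W E a b y g
    · exact no_gap_of_chain' h hpxy hpyz hyz.2 hxy.1 hyz.1 hnl g
        ⟨hpos, ⟨hWyg, hWgy⟩, hszg⟩
    · have hgy : g ≠ y := fun e => hWyg (e ▸ Wrefl h y)
      have hpyg : Parallel y g :=
        par_iff.mpr ⟨hk.symm.trans (between_iff.mp hbtw).1, fun e => hgy e.symm⟩
      obtain ⟨-, g', hbtw', hsy, hsg⟩ := incomp_structure h hpyg hWyg hWgy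
      have hszg' : StrictR (W E a b) z g' :=
        ⟨Wtrans h hszg.1 hsg.1, fun hc => hsg.2 (Wtrans h hc hszg.1)⟩
      have hbtw'' : Between y z g' := between_collapse hpos hbtw'
      exact no_gap_of_chain' h hpxy hpyz hyz.2 hxy.1 hyz.1 hnl g'
        ⟨hbtw'', hsy, hszg'⟩

/-- Gap survival: a pair with a `W`-gap and no `W`-link has a gap whose legs are not bad. -/
lemma exists_good_gap {x y : Coll m n}
    (hnl : ¬ ∃ z, IsLink (W E a b) x y z) (hgap : ∃ g, IsGap (W E a b) x y g) :
    ∃ g, IsGap (W E a b) x y g ∧ ¬ Bad E a b x g ∧ ¬ Bad E a b y g := by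
  classical
  obtain ⟨g₀, hg₀⟩ := hgap
  set f : Coll m n → ℕ :=
    fun g => (Finset.univ.filter (fun u => StrictR (W E a b) g u)).card with hf
  obtain ⟨g, hgS, hmin⟩ := Finset.exists_min_image
    (Finset.univ.filter (fun g => IsGap (W E a b) x y g)) f
    ⟨g₀, by simp [hg₀]⟩
  rw [Finset.mem_filter] at hgS
  obtain ⟨-, hbtw, hsxg, hsyg⟩ := hgS
  have key : ∀ g', IsGap (W E a b) x y g' → StrictR (W E a b) g g' → False := by
    intro g' hg' hgg'
    have hle := hmin g' (by simp [hg'])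
    have hlt : f g' < f g := by
      apply Finset.card_lt_card
      rw [Finset.ssubset_iff_of_subset]
      · exact ⟨g', by simp [hgg'], by simp; exact fun hc => hc.2 (Wrefl h g')⟩
      · intro u hu
        rw [Finset.mem_filter] at *
        exact ⟨Finset.mem_univ u, strictW_trans h hgg' hu.2⟩
    omega
  refine ⟨g, ⟨hbtw, hsxg, hsyg⟩, ?_, ?_⟩
  · rintro ⟨hp, hnl', g', hbtw', hsxg', hsgg'⟩
    refine key g' ⟨between_collapse hbtw hbtw', hsxg', ?_⟩ hsgg'
    exact ⟨Wtrans h hsyg.1 hsgg'.1, fun hc => hsgg'.2 (Wtrans h hc hsyg.1)⟩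
  · rintro ⟨hp, hnl', g', hbtw', hsyg', hsgg'⟩
    refine key g' ⟨?_, ?_, hsyg'⟩ hsgg'
    · exact between_symm (between_collapse (between_symm hbtw) hbtw')
    · exact ⟨Wtrans h hsxg.1 hsgg'.1, fun hc => hsgg'.2 (Wtrans h hc hsxg.1)⟩


omit h in
lemma V_sub_W {x y : Coll m n} (hv : V E a b x y) : W E a b x y := hv.1

lemma not_bad_of_orth {x y : Coll m n} (ho : Orthogonal x y) : ¬ Bad E a b x y :=
  fun hb => not_orth_of_par hb.1 ho

lemma linkV_iff_linkW {x y z : Coll m n} (hpar : Parallel x y) (ho : Orthogonal x z) :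
    IsLink (V E a b) x y z ↔ IsLink (W E a b) x y z := by
  have h1 : Orthogonal z y := orth_symm (orth_of_par_orth (par_symm hpar) ho)
  have h2 : Orthogonal y z := orth_symm h1
  have h3 : Orthogonal z x := orth_symm ho
  constructor
  · rintro ⟨ho', hc⟩
    exact ⟨ho', hc.imp (fun ⟨u, v⟩ => ⟨u.1, v.1⟩) (fun ⟨u, v⟩ => ⟨u.1, v.1⟩)⟩
  · rintro ⟨ho', hc⟩
    refine ⟨ho', hc.imp ?_ ?_⟩
    · exact fun ⟨u, v⟩ => ⟨⟨u, not_bad_of_orth h ho⟩, ⟨v, not_bad_of_orth h h1⟩⟩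
    · exact fun ⟨u, v⟩ => ⟨⟨u, not_bad_of_orth h h2⟩, ⟨v, not_bad_of_orth h h3⟩⟩

lemma strictW_of_strictV {x y : Coll m n} (hs : StrictR (V E a b) x y) :
    StrictR (W E a b) x y := by
  refine ⟨hs.1.1, fun hc => ?_⟩
  have := Wantisymm h hs.1.1 hc
  exact hs.2 (this ▸ hs.1)

lemma gapW_of_gapV {x y g : Coll m n} (hg : IsGap (V E a b) x y g) :
    IsGap (W E a b) x y g :=
  ⟨hg.1, strictW_of_strictV h hg.2.1, strictW_of_strictV h hg.2.2⟩

lemma V_good : IsGoodRect (V E a b) := by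
  constructor
  · intro x
    exact ⟨Wrefl h x, fun hb => (par_iff.mp hb.1).2 rfl⟩
  · intro x y z hxy hyz
    exact V_trans h hxy hyz
  · intro x y ho
    have := comp_W_of_E h (h.good.orth x y ho)
    exact this.imp (fun h1 => ⟨h1, not_bad_of_orth h ho⟩)
      (fun h1 => ⟨h1, not_bad_of_orth h (orth_symm ho)⟩)
  · intro x y hpar
    constructor
    · intro hc
      have hnb : ¬ Bad E a b x y := by
        rcases hc with h1 | h1
        · exact h1.2
        · exact fun hb => h1.2 (bad_symm hb)
      by_cases hl : ∃ z, IsLink (W E a b) x y z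
      · obtain ⟨z, hz⟩ := hl
        exact Or.inl ⟨z, (linkV_iff_linkW h hpar hz.1).mpr hz⟩
      · have hg : ¬ ∃ g, IsGap (W E a b) x y g := fun hg => hnb ⟨hpar, hl, hg⟩
        exact Or.inr (fun ⟨g, hgv⟩ => hg ⟨g, gapW_of_gapV h hgv⟩)
    · intro hc
      by_contra hnc
      push_neg at hnc
      have hstep : (¬ ∃ z, IsLink (W E a b) x y z) ∧ (∃ g, IsGap (W E a b) x y g) := by
        by_cases hb : Bad E a b x y
        · exact ⟨hb.2.1, hb.2.2⟩
        · have h1 : ¬ W E a b x y := fun hw => hnc.1 ⟨hw, hb⟩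
          have h2 : ¬ W E a b y x := fun hw => hnc.2 ⟨hw, fun hb' => hb (bad_symm hb')⟩
          exact incomp_structure h hpar h1 h2
      obtain ⟨hnl, hgap⟩ := hstep
      obtain ⟨g, hg, hb1, hb2⟩ := exists_good_gap h hnl hgap
      rcases hc with ⟨z, hz⟩ | hng
      · exact hnl ⟨z, hz.1, hz.2.imp (fun ⟨u,v⟩ => ⟨u.1, v.1⟩) (fun ⟨u,v⟩ => ⟨u.1, v.1⟩)⟩
      · refine hng ⟨g, hg.1, ?_, ?_⟩
        · exact ⟨⟨hg.2.1.1, hb1⟩, fun hcv => hg.2.1.2 hcv.1⟩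
        · exact ⟨⟨hg.2.2.1, hb2⟩, fun hcv => hg.2.2.2 hcv.1⟩

lemma V_vertex : IsVertexP (V E a b) :=
  ⟨V_good h, fun x y h1 h2 => Wantisymm h h1.1 h2.1⟩

omit h in
lemma V_refines : Refines (V E a b) E := fun _ _ hv => hv.1.1

lemma V_tie_pos : V E a b b a := by
  refine ⟨⟨h.ba, fun ⟨e, _⟩ => h.tie_ne e.symm⟩, ?_⟩
  rintro ⟨hpar, hnl, g, hbtw, hsb, hsa⟩
  -- both legs are E-strict
  have hsa' : StrictR E a g := by
    rcases strictW_cases hsa with h1 | ⟨e1, _⟩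
    · exact h1
    · exact absurd e1 h.tie_ne
  have hga : g ≠ a := fun e => hsa'.2 (e ▸ hsa'.1)
  have hsb' : StrictR E b g := by
    rcases strictW_cases hsb with h1 | ⟨_, e2⟩
    · exact h1
    · exact absurd e2 hga
  -- so (b,a) has an E-gap; but (b,a) has no E-link, contradicting goodness of E
  have hcomp : E b a ∨ E a b := Or.inl h.ba
  rcases (h.good.par b a hpar).mp hcomp with ⟨z, ho, hc⟩ | hngap
  · have hza : z ≠ a := fun e => not_orth_of_par hpar (e ▸ ho)
    have hzb : z ≠ b := fun e => orth_ne (orth_symm ho) e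
    have hzboth : E z b ∧ E b z := by
      rcases hc with ⟨h1, h2⟩ | ⟨h1, h2⟩
      · exact ⟨h.good.trans z a b h2 h.ab, h1⟩
      · exact ⟨h2, h.good.trans b a z h.ba h1⟩
    rcases h.uniq z b hzb hzboth.1 hzboth.2 with ⟨e, _⟩ | ⟨_, e⟩
    · exact hza e
    · exact h.tie_ne e.symm
  · exact hngap ⟨g, hbtw, hsb', hsa'⟩

omit h in
lemma V_tie_neg : ¬ V E a b a b := by
  rintro ⟨⟨-, hne⟩, -⟩
  exact hne ⟨rfl, rfl⟩

lemma agree_mixed {Vx : Coll m n → Coll m n → Prop} (hv : IsVertexP Vx)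
    (href : Refines Vx E) (hba : Vx b a) {u v : Coll m n} (ho : Orthogonal u v) :
    (Vx u v ↔ V E a b u v) := by
  have hVW : V E a b u v ↔ W E a b u v :=
    ⟨fun h1 => h1.1, fun h1 => ⟨h1, not_bad_of_orth h ho⟩⟩
  rw [hVW]
  by_cases h1 : u = a ∧ v = b
  · obtain ⟨rfl, rfl⟩ := h1
    constructor
    · intro hab'
      exact absurd (hv.2 u v hab' hba) h.tie_ne
    · intro hw
      exact (hw.2 ⟨rfl, rfl⟩).elim
  · by_cases h2 : u = b ∧ v = a
    · obtain ⟨rfl, rfl⟩ := h2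
      exact iff_of_true hba ⟨h.ba, h1⟩
    · by_cases hEuv : E u v
      · by_cases hEvu : E v u
        · exact absurd (h.uniq u v (orth_ne ho) hEuv hEvu) (by tauto)
        · refine iff_of_true ?_ ⟨hEuv, h1⟩
          rcases hv.1.orth u v ho with hc | hc
          · exact hc
          · exact absurd (href v u hc) hEvu
      · exact iff_of_false (fun hc => hEuv (href u v hc)) (fun hw => hEuv hw.1)

lemma tie_comp {Vx : Coll m n → Coll m n → Prop} (hv : IsVertexP Vx)
    (href : Refines Vx E) : Vx a b ∨ Vx b a := by
  by_cases hk : kind a = kind b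
  · have hpar : Parallel a b := par_iff.mpr ⟨hk, h.tie_ne⟩
    by_contra hnc
    push_neg at hnc
    have hnl := (hv.1.par a b hpar).not.mp (not_or.mpr ⟨hnc.1, hnc.2⟩)
    push_neg at hnl
    obtain ⟨-, g, hbtw, hsa, hsb⟩ := hnl
    have hga : g ≠ a := fun e => hsa.2 (e ▸ hsa.1)
    have hgb : g ≠ b := fun e => hsb.2 (e ▸ hsb.1)
    have hEag : E a g := href a g hsa.1
    have hEbg : E b g := href b g hsb.1
    have hnEga : ¬ E g a := by
      intro hEga
      rcases h.uniq g a hga hEga hEag with ⟨e, -⟩ | ⟨e, -⟩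
      · exact hga e
      · exact hgb e
    have hnEgb : ¬ E g b := by
      intro hEgb
      rcases h.uniq g b hgb hEgb hEbg with ⟨e, -⟩ | ⟨e, -⟩
      · exact hga e
      · exact hgb e
    rcases (h.good.par a b hpar).mp (Or.inl h.ab) with ⟨z, ho, hc⟩ | hngap
    · have hza : z ≠ a := fun e => orth_ne (orth_symm ho) e
      have hzboth : E z a ∧ E a z := by
        rcases hc with ⟨h1, h2⟩ | ⟨h1, h2⟩
        · exact ⟨h.good.trans z b a h2 h.ba, h1⟩
        · exact ⟨h2, h.good.trans a b z h.ab h1⟩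
      rcases h.uniq z a hza hzboth.1 hzboth.2 with ⟨e, -⟩ | ⟨e, -⟩
      · exact hza e
      · exact not_orth_of_par hpar (e ▸ ho)
    · exact hngap ⟨g, hbtw, ⟨hEag, hnEga⟩, ⟨hEbg, hnEgb⟩⟩
  · exact hv.1.orth a b (orth_iff.mpr hk)

lemma V_unique {Vx : Coll m n → Coll m n → Prop} (hv : IsVertexP Vx)
    (href : Refines Vx E) (hba : Vx b a) : Vx = V E a b := by
  have hnab : ¬ Vx a b := fun hc => h.tie_ne (hv.2 a b hc hba)
  have key : ∀ s : ℕ, ∀ x y : Coll m n, span x y ≤ s → (Vx x y ↔ V E a b x y) := by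
    intro s
    induction s with
    | zero =>
      intro x y hs
      by_cases hxy : x = y
      · subst hxy; exact iff_of_true (hv.1.refl x) ((V_good h).refl x)
      · by_cases hk : kind x = kind y
        · exact absurd hs (by have := span_pos_of_par (par_iff.mpr ⟨hk, hxy⟩); omega)
        · exact agree_mixed h hv href hba (orth_iff.mpr hk)
    | succ s ih =>
      intro x y hs
      by_cases hxy : x = y
      · subst hxy; exact iff_of_true (hv.1.refl x) ((V_good h).refl x)
      by_cases hk : kind x = kind y
      case neg => exact agree_mixed h hv href hba (orth_iff.mpr hk)
      case pos =>
      have hpar : Parallel x y := par_iff.mpr ⟨hk, hxy⟩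
      have hlink : (∃ z, IsLink Vx x y z) ↔ (∃ z, IsLink (V E a b) x y z) := by
        constructor <;> rintro ⟨z, ho, hc⟩ <;> refine ⟨z, ho, ?_⟩ <;>
        · have e1 := agree_mixed h hv href hba ho
          have e2 := agree_mixed h hv href hba
            (orth_symm (orth_of_par_orth (par_symm hpar) ho))
          have e3 := agree_mixed h hv href hba (orth_of_par_orth (par_symm hpar) ho)
          have e4 := agree_mixed h hv href hba (orth_symm ho)
          tauto
      have hgap : (∃ g, IsGap Vx x y g) ↔ (∃ g, IsGap (V E a b) x y g) := by
        constructor <;> rintro ⟨g, hbtw, hs1, hs2⟩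
        · have hgx : g ≠ x := fun e => hs1.2 (e ▸ hs1.1)
          have hgy : g ≠ y := fun e => hs2.2 (e ▸ hs2.1)
          obtain ⟨l1, l2⟩ := span_lt_of_between hbtw hgx hgy
          have e1 := ih x g (by omega)
          have e2 := ih g x (by rw [span_comm g x]; omega)
          have e3 := ih y g (by omega)
          have e4 := ih g y (by rw [span_comm g y]; omega)
          exact ⟨g, hbtw, ⟨e1.mp hs1.1, fun hc => hs1.2 (e2.mpr hc)⟩,
            ⟨e3.mp hs2.1, fun hc => hs2.2 (e4.mpr hc)⟩⟩
        · have hgx : g ≠ x := fun e => hs1.2 (e ▸ hs1.1)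
          have hgy : g ≠ y := fun e => hs2.2 (e ▸ hs2.1)
          obtain ⟨l1, l2⟩ := span_lt_of_between hbtw hgx hgy
          have e1 := ih x g (by omega)
          have e2 := ih g x (by rw [span_comm g x]; omega)
          have e3 := ih y g (by omega)
          have e4 := ih g y (by rw [span_comm g y]; omega)
          exact ⟨g, hbtw, ⟨e1.mpr hs1.1, fun hc => hs1.2 (e2.mp hc)⟩,
            ⟨e3.mpr hs2.1, fun hc => hs2.2 (e4.mp hc)⟩⟩
      have hcomp : (Vx x y ∨ Vx y x) ↔ (V E a b x y ∨ V E a b y x) := by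
        rw [hv.1.par x y hpar, (V_good h).par x y hpar, hlink, hgap]
      constructor
      · intro hvxy
        rcases hcomp.mp (Or.inl hvxy) with h1 | h1
        · exact h1
        · have hExy : E x y := href x y hvxy
          have hEyx : E y x := V_refines y x h1
          rcases h.uniq x y hxy hExy hEyx with ⟨e1, e2⟩ | ⟨e1, e2⟩
          · exfalso; rw [e1, e2] at hvxy; exact hnab hvxy
          · rw [e1, e2]; exact V_tie_pos h
      · intro hVxy
        rcases hcomp.mpr (Or.inl hVxy) with h1 | h1
        · exact h1
        · have hEyx : E y x := href y x h1
          have hExy : E x y := V_refines x y hVxy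
          rcases h.uniq x y hxy hExy hEyx with ⟨e1, e2⟩ | ⟨e1, e2⟩
          · exfalso; rw [e1, e2] at hVxy; exact V_tie_neg hVxy
          · rw [e1, e2]; exact hba
  funext x y
  exact propext (key (span x y) x y le_rfl)



end Tie

end EdgeTwo

/-- Every edge preorder refines exactly two vertex preorders: there are exactly two good
rectangular preorders which are partial orders and are refined by the edge preorder. -/
theorem edge_has_two_vertices {m n : ℕ}
    (E : Coll m n → Coll m n → Prop) (hE : IsEdgeP E) :
    ∃ V₁ V₂ : Coll m n → Coll m n → Prop, V₁ ≠ V₂ ∧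
      IsVertexP V₁ ∧ IsVertexP V₂ ∧ Refines V₁ E ∧ Refines V₂ E ∧
      ∀ V : Coll m n → Coll m n → Prop, IsVertexP V → Refines V E →
        V = V₁ ∨ V = V₂ := by
  classical
  obtain ⟨hgood, a, b, hne, hab, hba, huniq⟩ := hE
  have h1 : EdgeTwo.TieH E a b := ⟨hgood, hne, hab, hba, huniq⟩
  have h2 : EdgeTwo.TieH E b a := h1.symm
  refine ⟨EdgeTwo.V E a b, EdgeTwo.V E b a, ?_, EdgeTwo.V_vertex h1, EdgeTwo.V_vertex h2,
    EdgeTwo.V_refines, EdgeTwo.V_refines, ?_⟩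
  · intro he
    have hpos := EdgeTwo.V_tie_pos h1
    rw [he] at hpos
    exact EdgeTwo.V_tie_neg hpos
  · intro Vx hv href
    rcases EdgeTwo.tie_comp h1 hv href with hc | hc
    · exact Or.inr (EdgeTwo.V_unique h2 hv href hc)
    · exact Or.inl (EdgeTwo.V_unique h1 hv href hc)
end

section
/- Every finite lattice L can be uniquely recovered from its subposet of irreducibles: if L and L' are finite lattices whose subposets Irr(L) and Irr(L') of join-irreducible or meet-irreducible elements are isomorphic as posets, via an isomorphism extending to a map respecting joins and meets appropriately, then L ≅ L'. More precisely: a finite lattice L is determined up to isomorphism by the poset Irr(L) = {x ∈ L : x is join-irreducible or meet-irreducible}. -/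
/-- `x` is join-irreducible: not the bottom element, and not a join of two other
elements. -/
def JoinIrred {L : Type*} [Lattice L] [BoundedOrder L] (x : L) : Prop :=
  x ≠ ⊥ ∧ ∀ a b : L, x = a ⊔ b → x = a ∨ x = b

/-- `x` is meet-irreducible: not the top element, and not a meet of two other
elements. -/
def MeetIrred {L : Type*} [Lattice L] [BoundedOrder L] (x : L) : Prop :=
  x ≠ ⊤ ∧ ∀ a b : L, x = a ⊓ b → x = a ∨ x = b

/-!
Every element `x` of a finite lattice is the join of the join-irreducibles below it and the
meet of the meet-irreducibles above it, so it is determined by either set. Extend `e` to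
`φ x := ⨆ {e i | i irreducible, i ≤ x}`. For irreducible `m` one gets `φ x ≤ m ↔ x ≤ e⁻¹ m`,
so the extension `ψ` of `e⁻¹` satisfies `ψ (φ x) ≤ m ↔ x ≤ m` for every meet-irreducible `m`,
i.e. `ψ ∘ φ = id`; symmetrically `φ ∘ ψ = id`, and both maps are monotone.
-/

section Irreducible

variable {L : Type*} [Lattice L] [BoundedOrder L]

theorem joinIrred_iff_supIrred {x : L} : JoinIrred x ↔ SupIrred x :=
  ⟨fun ⟨hx, h⟩ => ⟨isMin_iff_eq_bot.not.mpr hx, fun a b hab => (h a b hab.symm).imp .symm .symm⟩,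
    fun ⟨hx, h⟩ => ⟨isMin_iff_eq_bot.not.mp hx, fun _ _ hab => (h hab.symm).imp .symm .symm⟩⟩

theorem meetIrred_iff_infIrred {x : L} : MeetIrred x ↔ InfIrred x :=
  ⟨fun ⟨hx, h⟩ => ⟨isMax_iff_eq_top.not.mpr hx, fun a b hab => (h a b hab.symm).imp .symm .symm⟩,
    fun ⟨hx, h⟩ => ⟨isMax_iff_eq_top.not.mp hx, fun _ _ hab => (h hab.symm).imp .symm .symm⟩⟩

theorem le_of_forall_joinIrred_le [WellFoundedLT L] {x y : L}
    (h : ∀ j, JoinIrred j → j ≤ x → j ≤ y) : x ≤ y := by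
  obtain ⟨s, rfl, hs⟩ := exists_supIrred_decomposition x
  exact Finset.sup_le fun j hj =>
    h j (joinIrred_iff_supIrred.mpr (hs hj)) (Finset.le_sup (f := id) hj)

theorem le_of_forall_le_meetIrred [WellFoundedGT L] {x y : L}
    (h : ∀ m, MeetIrred m → y ≤ m → x ≤ m) : x ≤ y := by
  obtain ⟨s, rfl, hs⟩ := exists_infIrred_decomposition y
  exact Finset.le_inf fun m hm =>
    h m (meetIrred_iff_infIrred.mpr (hs hm)) (Finset.inf_le (f := id) hm)

end Irreducible

abbrev Irr (L : Type*) [Lattice L] [BoundedOrder L] : Type _ :=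
  {x : L // JoinIrred x ∨ MeetIrred x}

section Extension

variable {L L' : Type*} [Lattice L] [Lattice L'] [BoundedOrder L] [BoundedOrder L'] [Fintype L]

open Classical in
noncomputable def irrExtend (e : Irr L ≃o Irr L') (x : L) : L' :=
  (Finset.univ.filter fun i : Irr L => i.val ≤ x).sup fun i => (e i).val

theorem irrExtend_mono (e : Irr L ≃o Irr L') : Monotone (irrExtend e) := by
  classical
  exact fun _ _ hxy => Finset.sup_mono <| Finset.monotone_filter_right _ fun _ _ hi => hi.trans hxy

theorem irrExtend_le_iff (e : Irr L ≃o Irr L') (x : L) (m : Irr L') :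
    irrExtend e x ≤ m.val ↔ x ≤ (e.symm m).val := by
  classical
  constructor
  · intro h
    refine le_of_forall_joinIrred_le fun j hj hjx => ?_
    have hej : (e ⟨j, .inl hj⟩).val ≤ irrExtend e x :=
      Finset.le_sup (f := fun i => (e i).val) (by simpa using hjx)
    exact Subtype.coe_le_coe.mpr (e.le_symm_apply.mpr (Subtype.coe_le_coe.mp (hej.trans h)))
  · intro h
    refine Finset.sup_le fun i hi => ?_
    have hix : i ≤ e.symm m := Subtype.coe_le_coe.mp ((Finset.mem_filter.mp hi).2.trans h)
    exact Subtype.coe_le_coe.mpr (e.le_symm_apply.mp hix)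

theorem irrExtend_symm_irrExtend [Fintype L'] (e : Irr L ≃o Irr L') (x : L) :
    irrExtend e.symm (irrExtend e x) = x := by
  have h : ∀ m, MeetIrred m → (irrExtend e.symm (irrExtend e x) ≤ m ↔ x ≤ m) := fun m hm => by
    rw [irrExtend_le_iff e.symm _ ⟨m, .inr hm⟩, OrderIso.symm_symm, irrExtend_le_iff,
      OrderIso.symm_apply_apply]
  exact le_antisymm (le_of_forall_le_meetIrred fun m hm => (h m hm).mpr)
    (le_of_forall_le_meetIrred fun m hm => (h m hm).mp)

noncomputable def irrExtendOrderIso [Fintype L'] (e : Irr L ≃o Irr L') : L ≃o L' :=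
  Equiv.toOrderIso
    ⟨irrExtend e, irrExtend e.symm, irrExtend_symm_irrExtend e, irrExtend_symm_irrExtend e.symm⟩
    (irrExtend_mono e) (irrExtend_mono e.symm)

end Extension

/-- A finite lattice is determined up to isomorphism by its subposet of irreducible
(join-irreducible or meet-irreducible) elements (Stanley, EC1, Exercise 3.27). -/
theorem lattice_determined_by_irreducibles
    {L L' : Type*} [Lattice L] [Lattice L'] [Fintype L] [Fintype L']
    [BoundedOrder L] [BoundedOrder L']
    (e : {x : L // JoinIrred x ∨ MeetIrred x} ≃o
         {x : L' // JoinIrred x ∨ MeetIrred x}) :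
    Nonempty (L ≃o L') :=
  ⟨irrExtendOrderIso e⟩
end
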